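/- arXiv:2007.03043 — 7 statements merged into one kernel-verified Lean document; each statement's English description precedes it below -/
import Mathlib

section
/- With Λ as above, 1 - Λ(s·√φ(s))² = 4·φ(s)·(s·φ'(s) + φ(s)) / (s·φ'(s) + 2·φ(s))² for all s > 0, and consequently -1 < Λ(t) < 1 for all t > 0. -/
/-!
Since `ζ` inverts `g(s) = s·√φ(s)`, the chain rule gives `ζ'(g s) = 1 / g'(s) = 2√φ(s) / (s·φ'(s) + 2·φ(s))`.
The elasticity of `Θ(t) = ζ(t)/t` is that of `ζ` minus one, so at `t = g s` (where `ζ t = s`)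
`Λ(t) = t·ζ'(t)/s - 1 = -s·φ'(s) / (s·φ'(s) + 2·φ(s))`, and the identity is algebra. Its right-hand side
is positive because `φ > 0` and `(s·φ)' > 0`, so `Λ² < 1` at every `t = g(ζ t) > 0`.
-/

open Filter Topology

lemma hasDerivAt_mul_sqrt {φ : ℝ → ℝ} {s : ℝ} (hφ : DifferentiableAt ℝ φ s) (hp : 0 < φ s) :
    HasDerivAt (fun u => u * √(φ u)) ((s * deriv φ s + 2 * φ s) / (2 * √(φ s))) s := by
  have hsqrt : 0 < √(φ s) := Real.sqrt_pos.2 hp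
  refine ((hasDerivAt_id' s).fun_mul (hφ.hasDerivAt.sqrt hp.ne')).congr_deriv ?_
  field_simp
  rw [Real.sq_sqrt hp.le]
  ring

lemma deriv_mul_eq_one_of_leftInverse {f g : ℝ → ℝ} {g' s : ℝ}
    (hf : DifferentiableAt ℝ f (g s)) (hg : HasDerivAt g g' s)
    (hinv : ∀ᶠ u in 𝓝 s, f (g u) = u) : deriv f (g s) * g' = 1 :=
  (hf.hasDerivAt.comp s hg).unique ((hasDerivAt_id s).congr_of_eventuallyEq hinv)

lemma elasticity_div_id {ζ : ℝ → ℝ} {t : ℝ} (hζ : DifferentiableAt ℝ ζ t) (ht : t ≠ 0)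
    (hζt : ζ t ≠ 0) :
    t * deriv (fun u => ζ u / u) t / (ζ t / t) = t * deriv ζ t / ζ t - 1 := by
  have h : HasDerivAt (fun u => ζ u / u) ((deriv ζ t * t - ζ t * 1) / t ^ 2) t :=
    hζ.hasDerivAt.div (hasDerivAt_id t) ht
  rw [h.deriv]
  field_simp

lemma elasticity_div_id_inverse_mul_sqrt {φ ζ : ℝ → ℝ} {s : ℝ} (hs : 0 < s)
    (hφ : DifferentiableAt ℝ φ s) (hp : 0 < φ s) (hζ : DifferentiableAt ℝ ζ (s * √(φ s)))
    (hinv : ∀ᶠ u in 𝓝 s, ζ (u * √(φ u)) = u) :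
    s * √(φ s) * deriv (fun u => ζ u / u) (s * √(φ s)) / (ζ (s * √(φ s)) / (s * √(φ s)))
      = -(s * deriv φ s) / (s * deriv φ s + 2 * φ s) := by
  have hsqrt : 0 < √(φ s) := Real.sqrt_pos.2 hp
  have hζt : ζ (s * √(φ s)) = s := hinv.self_of_nhds
  have hinvDeriv := deriv_mul_eq_one_of_leftInverse (g := fun u => u * √(φ u)) hζ
    (hasDerivAt_mul_sqrt hφ hp) hinv
  have hD : s * deriv φ s + 2 * φ s ≠ 0 := by
    rintro hD
    rw [hD, zero_div, mul_zero] at hinvDeriv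
    exact zero_ne_one hinvDeriv
  have hζ' : deriv ζ (s * √(φ s)) = 2 * √(φ s) / (s * deriv φ s + 2 * φ s) := by
    rw [eq_div_iff hD]
    field_simp at hinvDeriv
    linarith
  rw [elasticity_div_id hζ (mul_pos hs hsqrt).ne' (by rw [hζt]; exact hs.ne'), hζt, hζ']
  field_simp
  rw [Real.sq_sqrt hp.le]
  ring

lemma one_sub_sq_neg_div_add_two_mul {x p : ℝ} (h : x + 2 * p ≠ 0) :
    1 - (-x / (x + 2 * p)) ^ 2 = 4 * p * (x + p) / (x + 2 * p) ^ 2 := by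
  field_simp
  ring

theorem stmt_4_general (φ ζ : ℝ → ℝ)
    (hφpos : ∀ s > (0:ℝ), 0 < φ s)
    (hC1 : ContDiffOn ℝ 1 φ (Set.Ioi 0))
    (hζC1 : ContDiffOn ℝ 1 ζ (Set.Ioi 0))
    (hderiv : ∀ s > (0:ℝ), 0 < deriv (fun u => u * φ u) s)
    (hζ1 : ∀ s > (0:ℝ), ζ (s * Real.sqrt (φ s)) = s)
    (hζ2 : ∀ t > (0:ℝ), ζ t * Real.sqrt (φ (ζ t)) = t)
    (Λ : ℝ → ℝ)
    (hΛ : ∀ t > (0:ℝ), Λ t = t * deriv (fun u => ζ u / u) t / (ζ t / t)) :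
    (∀ s > (0:ℝ),
      1 - (Λ (s * Real.sqrt (φ s))) ^ 2
        = 4 * φ s * (s * deriv φ s + φ s) / (s * deriv φ s + 2 * φ s) ^ 2) ∧
    (∀ t > (0:ℝ), -1 < Λ t ∧ Λ t < 1) := by
  have hφd : ∀ s > (0:ℝ), DifferentiableAt ℝ φ s := fun s hs =>
    (hC1.differentiableOn one_ne_zero).differentiableAt (Ioi_mem_nhds hs)
  have hζd : ∀ t > (0:ℝ), DifferentiableAt ℝ ζ t := fun t ht =>
    (hζC1.differentiableOn one_ne_zero).differentiableAt (Ioi_mem_nhds ht)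
  have hsum : ∀ s > (0:ℝ), 0 < s * deriv φ s + φ s := fun s hs => by
    have h := hderiv s hs
    rw [deriv_fun_mul differentiableAt_fun_id (hφd s hs), deriv_id''] at h
    linarith
  have hident : ∀ s > (0:ℝ), 1 - (Λ (s * √(φ s))) ^ 2
      = 4 * φ s * (s * deriv φ s + φ s) / (s * deriv φ s + 2 * φ s) ^ 2 := by
    intro s hs
    have ht : 0 < s * √(φ s) := mul_pos hs (Real.sqrt_pos.2 (hφpos s hs))
    rw [hΛ _ ht, elasticity_div_id_inverse_mul_sqrt hs (hφd s hs) (hφpos s hs) (hζd _ ht)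
      (eventually_of_mem (Ioi_mem_nhds hs) hζ1), one_sub_sq_neg_div_add_two_mul]
    linarith [hφpos s hs, hsum s hs]
  refine ⟨hident, fun t ht => ?_⟩
  have hs : 0 < ζ t := pos_of_mul_pos_left (hζ2 t ht ▸ ht) (Real.sqrt_nonneg _)
  have hrhs : 0 < 4 * φ (ζ t) * (ζ t * deriv φ (ζ t) + φ (ζ t))
      / (ζ t * deriv φ (ζ t) + 2 * φ (ζ t)) ^ 2 := by
    have := hφpos _ hs
    have := hsum _ hs
    apply div_pos (by positivity)
    nlinarith
  have h := hident (ζ t) hs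
  rw [hζ2 t ht] at h
  rw [← abs_lt, ← sq_lt_one_iff_abs_lt_one]
  linarith

/-- With `Λ(t) = t·Θ'(t)/Θ(t)` as above,
`1 - Λ(s·√φ(s))² = 4·φ(s)·(s·φ'(s) + φ(s)) / (s·φ'(s) + 2·φ(s))²` for all `s > 0`,
and consequently `-1 < Λ(t) < 1` for all `t > 0`. -/
theorem stmt_4 (φ ζ : ℝ → ℝ)
    (hφpos : ∀ s > (0:ℝ), 0 < φ s)
    (hC1 : ContDiffOn ℝ 1 φ (Set.Ioi 0))
    (hζC1 : ContDiffOn ℝ 1 ζ (Set.Ioi 0))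
    (hderiv : ∀ s > (0:ℝ), 0 < deriv (fun u => u * φ u) s)
    (hrange : (fun s => s * φ s) '' Set.Ioi 0 = Set.Ioi 0)
    (hζpos : ∀ t > (0:ℝ), 0 < ζ t)
    (hζ1 : ∀ s > (0:ℝ), ζ (s * Real.sqrt (φ s)) = s)
    (hζ2 : ∀ t > (0:ℝ), ζ t * Real.sqrt (φ (ζ t)) = t)
    (Λ : ℝ → ℝ)
    (hΛ : ∀ t > (0:ℝ), Λ t = t * deriv (fun u => ζ u / u) t / (ζ t / t)) :
    (∀ s > (0:ℝ),
      1 - (Λ (s * Real.sqrt (φ s))) ^ 2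
        = 4 * φ s * (s * deriv φ s + φ s) / (s * deriv φ s + 2 * φ s) ^ 2) ∧
    (∀ t > (0:ℝ), -1 < Λ t ∧ Λ t < 1) :=
  stmt_4_general φ ζ hφpos hC1 hζC1 hderiv hζ1 hζ2 Λ hΛ
end

section
/- If φ(s) ≍ sʳ and (s·φ(s))' ≍ sʳ on (0, s₀) for some r > -1, and ψ is defined via the inverse of s·φ(s), then ψ(t) ≍ t^{-r/(1+r)} and (t·ψ(t))' ≍ t^{-r/(1+r)} on (0, t₀) for some t₀ > 0. -/
/-! Write `F(s) = s φ(s)` and `G(t) = t ψ(t)` for its inverse, and take `s = G(t)`, so that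
`ψ(t) = 1 / φ(s)`. Near `0` we have `t = F(s) ≍ s^(1+r)`, hence `s ≍ t^(1/(1+r))` and
`ψ(t) = s / t ≍ t^(-r/(1+r))`. By the inverse function rule `G'(t) = 1 / F'(s)`, and
`F'(s) ≍ s^r ≍ φ(s)`, so `G'(t) ≍ ψ(t)`. -/

open Set

section Comparison

variable {p r c₁ c₂ d₁ d₂ s t y A D : ℝ}

theorem div_bounds_of_bounds_rpow (hp : 0 < p) (hc₁ : 0 < c₁) (hc₂ : 0 < c₂) (hs : 0 < s)
    (h₁ : c₁ * s ^ p ≤ t) (h₂ : t ≤ c₂ * s ^ p) :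
    c₂ ^ (-p⁻¹) * t ^ (p⁻¹ - 1) ≤ s / t ∧ s / t ≤ c₁ ^ (-p⁻¹) * t ^ (p⁻¹ - 1) := by
  have ht : 0 < t := lt_of_lt_of_le (by positivity) h₁
  have hrewrite : ∀ c > 0, c ^ (-p⁻¹) * t ^ (p⁻¹ - 1) = (t / c) ^ p⁻¹ / t := fun c hc => by
    rw [Real.div_rpow ht.le hc.le, Real.rpow_sub_one ht.ne', Real.rpow_neg hc.le]
    ring
  rw [hrewrite c₁ hc₁, hrewrite c₂ hc₂]
  constructor
  · gcongr
    rw [Real.rpow_inv_le_iff_of_pos (by positivity) hs.le hp, div_le_iff₀ hc₂]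
    linarith
  · gcongr
    rw [Real.le_rpow_inv_iff_of_pos hs.le (by positivity) hp, le_div_iff₀ hc₁]
    linarith

theorem inv_bounds_of_bounds_rpow (hr : -1 < r) (hc₁ : 0 < c₁) (hc₂ : 0 < c₂) (hs : 0 < s)
    (h₁ : c₁ * s ^ r ≤ y) (h₂ : y ≤ c₂ * s ^ r) :
    c₂ ^ (-(1 + r)⁻¹) * (s * y) ^ (-r / (1 + r)) ≤ y⁻¹ ∧
      y⁻¹ ≤ c₁ ^ (-(1 + r)⁻¹) * (s * y) ^ (-r / (1 + r)) := by
  have h1r : 0 < 1 + r := by linarith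
  have hy : 0 < y := lt_of_lt_of_le (by positivity) h₁
  have hexp : -r / (1 + r) = (1 + r)⁻¹ - 1 := by field_simp; ring
  have hpow : s ^ (1 + r) = s * s ^ r := by rw [Real.rpow_add hs, Real.rpow_one]
  have hdiv : s / (s * y) = y⁻¹ := by field_simp
  rw [hexp, ← hdiv]
  apply div_bounds_of_bounds_rpow h1r hc₁ hc₂ hs <;> rw [hpow] <;> nlinarith

theorem inv_bounds_of_common_bounds (hA : 0 < A) (hc₁ : 0 < c₁) (hd₁ : 0 < d₁)
    (hy₁ : c₁ * A ≤ y) (hy₂ : y ≤ c₂ * A) (hD₁ : d₁ * A ≤ D) (hD₂ : D ≤ d₂ * A) :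
    c₁ / d₂ * y⁻¹ ≤ D⁻¹ ∧ D⁻¹ ≤ c₂ / d₁ * y⁻¹ := by
  have hy : 0 < y := lt_of_lt_of_le (by positivity) hy₁
  have hD : 0 < D := lt_of_lt_of_le (by positivity) hD₁
  have hd₂ : 0 < d₂ := pos_of_mul_pos_left (hD.trans_le hD₂) hA.le
  have hc₂ : 0 < c₂ := pos_of_mul_pos_left (hy.trans_le hy₂) hA.le
  constructor
  · calc c₁ / d₂ * y⁻¹ = (d₂ * (y / c₁))⁻¹ := by field_simp
      _ ≤ (d₂ * A)⁻¹ := by gcongr; rwa [le_div_iff₀ hc₁, mul_comm]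
      _ ≤ D⁻¹ := by gcongr
  · calc D⁻¹ ≤ (d₁ * A)⁻¹ := by gcongr
      _ ≤ (d₁ * (y / c₂))⁻¹ := by gcongr; rwa [div_le_iff₀ hc₂, mul_comm]
      _ = c₂ / d₁ * y⁻¹ := by field_simp

end Comparison

section InverseFunction

variable {F G : ℝ → ℝ}

theorem strictMonoOn_of_rightInvOn (hF : StrictMonoOn F (Ioi 0))
    (hG : MapsTo G (Ioi 0) (Ioi 0)) (hFG : RightInvOn G F (Ioi 0)) : StrictMonoOn G (Ioi 0) :=
  fun a ha b hb hab => (hF.lt_iff_lt (hG ha) (hG hb)).1 (by rwa [hFG ha, hFG hb])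

theorem lt_of_lt_apply_of_rightInvOn (hF : StrictMonoOn F (Ioi 0))
    (hG : MapsTo G (Ioi 0) (Ioi 0)) (hFG : RightInvOn G F (Ioi 0)) {s₀ t : ℝ} (hs₀ : 0 < s₀)
    (ht : 0 < t) (h : t < F s₀) : G t < s₀ :=
  (hF.lt_iff_lt (hG ht) hs₀).1 (by rwa [hFG ht])

theorem hasDerivAt_of_invOn (hF : StrictMonoOn F (Ioi 0)) (hG : MapsTo G (Ioi 0) (Ioi 0))
    (hFmaps : MapsTo F (Ioi 0) (Ioi 0)) (hinv : InvOn G F (Ioi 0) (Ioi 0)) {t : ℝ} (ht : 0 < t)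
    (hD : deriv F (G t) ≠ 0) : HasDerivAt G (deriv F (G t))⁻¹ t := by
  have hcont : ContinuousAt G t :=
    (strictMonoOn_of_rightInvOn hF hG hinv.2).continuousAt_of_image_mem_nhds (Ioi_mem_nhds ht)
      (Filter.mem_of_superset (Ioi_mem_nhds (hG ht)) fun x hx => ⟨F x, hFmaps hx, hinv.1 hx⟩)
  refine HasDerivAt.of_local_left_inverse hcont (differentiableAt_of_deriv_ne_zero hD).hasDerivAt
    hD ?_
  filter_upwards [Ioi_mem_nhds ht] with x hx using hinv.2 hx

end InverseFunction

theorem stmt_11_general (φ ψ : ℝ → ℝ) (r s₀ c₁ c₂ d₁ d₂ : ℝ)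
    (hφpos : ∀ s > (0:ℝ), 0 < φ s)
    (hmono : StrictMonoOn (fun s => s * φ s) (Set.Ioi 0))
    (hψpos : ∀ t > (0:ℝ), 0 < ψ t)
    (hinv1 : ∀ s > (0:ℝ), (s * φ s) * ψ (s * φ s) = s)
    (hinv2 : ∀ t > (0:ℝ), (t * ψ t) * φ (t * ψ t) = t)
    (hr : -1 < r) (hs₀ : 0 < s₀)
    (hc₁ : 0 < c₁) (hc₂ : 0 < c₂) (hd₁ : 0 < d₁) (hd₂ : 0 < d₂)
    (hφbound : ∀ s ∈ Set.Ioo 0 s₀, c₁ * s ^ r ≤ φ s ∧ φ s ≤ c₂ * s ^ r)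
    (hdbound : ∀ s ∈ Set.Ioo 0 s₀,
      d₁ * s ^ r ≤ deriv (fun u => u * φ u) s ∧ deriv (fun u => u * φ u) s ≤ d₂ * s ^ r) :
    ∃ t₀ > (0:ℝ), ∃ e₁ > (0:ℝ), ∃ e₂ > (0:ℝ), ∃ f₁ > (0:ℝ), ∃ f₂ > (0:ℝ),
      ∀ t ∈ Set.Ioo 0 t₀,
        (e₁ * t ^ (-r / (1 + r)) ≤ ψ t ∧ ψ t ≤ e₂ * t ^ (-r / (1 + r))) ∧
        (f₁ * t ^ (-r / (1 + r)) ≤ deriv (fun u => u * ψ u) t ∧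
          deriv (fun u => u * ψ u) t ≤ f₂ * t ^ (-r / (1 + r))) := by
  have hFmaps : MapsTo (fun s => s * φ s) (Ioi 0) (Ioi 0) := fun s hs => mul_pos hs (hφpos s hs)
  have hGmaps : MapsTo (fun t => t * ψ t) (Ioi 0) (Ioi 0) := fun t ht => mul_pos ht (hψpos t ht)
  have hinv : InvOn (fun t => t * ψ t) (fun s => s * φ s) (Ioi 0) (Ioi 0) := ⟨hinv1, hinv2⟩
  refine ⟨s₀ * φ s₀, hFmaps hs₀, c₂ ^ (-(1 + r)⁻¹), by positivity, c₁ ^ (-(1 + r)⁻¹),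
    by positivity, c₁ / d₂ * c₂ ^ (-(1 + r)⁻¹), by positivity, c₂ / d₁ * c₁ ^ (-(1 + r)⁻¹),
    by positivity, ?_⟩
  rintro t ⟨ht, htt₀⟩
  set s := t * ψ t
  have hs : s ∈ Ioo 0 s₀ :=
    ⟨hGmaps ht, lt_of_lt_apply_of_rightInvOn hmono hGmaps hinv.2 hs₀ ht htt₀⟩
  obtain ⟨hφ₁, hφ₂⟩ := hφbound s hs
  obtain ⟨hD₁, hD₂⟩ := hdbound s hs
  have hψ : ψ t = (φ s)⁻¹ := by
    refine eq_inv_of_mul_eq_one_left (mul_left_cancel₀ ht.ne' ?_)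
    rw [← mul_assoc, hinv2 t ht, mul_one]
  have hderiv : deriv (fun u => u * ψ u) t = (deriv (fun u => u * φ u) s)⁻¹ :=
    (hasDerivAt_of_invOn hmono hGmaps hFmaps hinv ht
      ((mul_pos hd₁ (Real.rpow_pos_of_pos hs.1 r)).trans_le hD₁).ne').deriv
  obtain ⟨hψ₁, hψ₂⟩ := inv_bounds_of_bounds_rpow hr hc₁ hc₂ hs.1 hφ₁ hφ₂
  obtain ⟨hG₁, hG₂⟩ :=
    inv_bounds_of_common_bounds (Real.rpow_pos_of_pos hs.1 r) hc₁ hd₁ hφ₁ hφ₂ hD₁ hD₂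
  rw [hinv2 t ht, ← hψ] at hψ₁ hψ₂
  rw [← hψ] at hG₁ hG₂
  rw [hderiv, mul_assoc, mul_assoc]
  exact ⟨⟨hψ₁, hψ₂⟩, hG₁.trans' (by gcongr), hG₂.trans (by gcongr)⟩

/-- If `φ(s) ≍ sʳ` and `(s·φ(s))' ≍ sʳ` on `(0, s₀)` for some `r > -1`, and `t·ψ(t)` is the
inverse of `s·φ(s)`, then `ψ(t) ≍ t^(-r/(1+r))` and `(t·ψ(t))' ≍ t^(-r/(1+r))` on some `(0, t₀)`. -/
theorem stmt_11 (φ ψ : ℝ → ℝ) (r s₀ c₁ c₂ d₁ d₂ : ℝ)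
    (hφpos : ∀ s > (0:ℝ), 0 < φ s)
    (hC1 : ContDiffOn ℝ 1 φ (Set.Ioi 0))
    (hmono : StrictMonoOn (fun s => s * φ s) (Set.Ioi 0))
    (hrange : (fun s => s * φ s) '' Set.Ioi 0 = Set.Ioi 0)
    (hψpos : ∀ t > (0:ℝ), 0 < ψ t)
    (hinv1 : ∀ s > (0:ℝ), (s * φ s) * ψ (s * φ s) = s)
    (hinv2 : ∀ t > (0:ℝ), (t * ψ t) * φ (t * ψ t) = t)
    (hr : -1 < r) (hs₀ : 0 < s₀)
    (hc₁ : 0 < c₁) (hc₂ : 0 < c₂) (hd₁ : 0 < d₁) (hd₂ : 0 < d₂)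
    (hφbound : ∀ s ∈ Set.Ioo 0 s₀, c₁ * s ^ r ≤ φ s ∧ φ s ≤ c₂ * s ^ r)
    (hdbound : ∀ s ∈ Set.Ioo 0 s₀,
      d₁ * s ^ r ≤ deriv (fun u => u * φ u) s ∧ deriv (fun u => u * φ u) s ≤ d₂ * s ^ r) :
    ∃ t₀ > (0:ℝ), ∃ e₁ > (0:ℝ), ∃ e₂ > (0:ℝ), ∃ f₁ > (0:ℝ), ∃ f₂ > (0:ℝ),
      ∀ t ∈ Set.Ioo 0 t₀,
        (e₁ * t ^ (-r / (1 + r)) ≤ ψ t ∧ ψ t ≤ e₂ * t ^ (-r / (1 + r))) ∧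
        (f₁ * t ^ (-r / (1 + r)) ≤ deriv (fun u => u * ψ u) t ∧
          deriv (fun u => u * ψ u) t ≤ f₂ * t ^ (-r / (1 + r))) :=
  stmt_11_general φ ψ r s₀ c₁ c₂ d₁ d₂ hφpos hmono hψpos hinv1 hinv2 hr hs₀ hc₁ hc₂ hd₁ hd₂ hφbound
    hdbound
end

section
/- If φ(s) ≍ sʳ on (0, s₀) for some r > -1, then there exist K > 0 and t₀ > 0 such that ζ(t) ≤ K·t^{2/(2+r)} and Θ(t) ≤ K·t^{-r/(2+r)} for all t ∈ (0, t₀), where ζ is the inverse of s·√φ(s) and Θ(t) = ζ(t)/t. -/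
/-!
Since `s ↦ s·φ(s)` is increasing, so is `g(s) = s·√φ(s) = √(s · s φ(s))`, hence `ζ(t) < s₀` as
soon as `t < g(s₀)`. There the lower bound `φ ≥ c₁ sʳ` gives `t² = ζ(t)² φ(ζ(t)) ≥ c₁ ζ(t)^(2+r)`,
which inverts to `ζ(t) ≤ c₁^(-1/(2+r)) t^(2/(2+r))`; dividing by `t` gives the bound on `Θ`.
-/

open Set

lemma mul_sqrt_eq_sqrt_mul_mul {u : ℝ} (hu : 0 ≤ u) (x : ℝ) :
    u * √x = √(u * (u * x)) := by
  rw [← mul_assoc, Real.sqrt_mul (mul_self_nonneg u), Real.sqrt_mul_self hu]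

lemma monotoneOn_mul_sqrt {φ : ℝ → ℝ} (hφ : ∀ s > (0:ℝ), 0 ≤ φ s)
    (hmono : MonotoneOn (fun u => u * φ u) (Ioi 0)) :
    MonotoneOn (fun u => u * √(φ u)) (Ioi 0) := by
  intro a ha b hb hab
  simp only [mul_sqrt_eq_sqrt_mul_mul (le_of_lt ha), mul_sqrt_eq_sqrt_mul_mul (le_of_lt hb)]
  exact Real.sqrt_le_sqrt <|
    mul_le_mul hab (hmono ha hb hab) (mul_nonneg (le_of_lt ha) (hφ a ha)) (le_of_lt hb)

lemma mul_rpow_le_sq_of_mul_sqrt_eq {z y c r t : ℝ} (hz : 0 < z) (hy : 0 ≤ y)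
    (hcy : c * z ^ r ≤ y) (ht : z * √y = t) :
    c * z ^ (2 + r) ≤ t ^ 2 :=
  calc c * z ^ (2 + r) = z ^ 2 * (c * z ^ r) := by
        rw [Real.rpow_add hz, Real.rpow_two]; ring
    _ ≤ z ^ 2 * y := by gcongr
    _ = t ^ 2 := by rw [← ht, mul_pow, Real.sq_sqrt hy]

lemma le_inv_rpow_mul_rpow_of_mul_rpow_le_sq {z c p t : ℝ} (hz : 0 ≤ z) (hc : 0 < c)
    (hp : 0 < p) (ht : 0 ≤ t) (h : c * z ^ p ≤ t ^ 2) :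
    z ≤ c⁻¹ ^ p⁻¹ * t ^ (2 / p) := by
  have hz_le : z ≤ (c⁻¹ * t ^ 2) ^ p⁻¹ :=
    (Real.le_rpow_inv_iff_of_pos hz (by positivity) hp).2 ((le_inv_mul_iff₀ hc).2 h)
  rwa [Real.mul_rpow (by positivity) (by positivity), ← Real.rpow_natCast_mul ht,
    Nat.cast_ofNat, ← div_eq_mul_inv] at hz_le

lemma rpow_two_div_two_add_div_self {t r : ℝ} (ht : t ≠ 0) (hr : 2 + r ≠ 0) :
    t ^ (2 / (2 + r)) / t = t ^ (-r / (2 + r)) := by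
  rw [← Real.rpow_sub_one ht]
  congr 1
  field_simp
  ring

theorem stmt_12_general (φ ζ : ℝ → ℝ) (r s₀ c₁ c₂ : ℝ)
    (hφpos : ∀ s > (0:ℝ), 0 < φ s)
    (hC1 : ContDiffOn ℝ 1 φ (Set.Ioi 0))
    (hderiv : ∀ s > (0:ℝ), 0 < deriv (fun u => u * φ u) s)
    (hζpos : ∀ t > (0:ℝ), 0 < ζ t)
    (hζ2 : ∀ t > (0:ℝ), ζ t * Real.sqrt (φ (ζ t)) = t)
    (hr : -1 < r) (hs₀ : 0 < s₀) (hc₁ : 0 < c₁)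
    (hφbound : ∀ s ∈ Set.Ioo 0 s₀, c₁ * s ^ r ≤ φ s ∧ φ s ≤ c₂ * s ^ r) :
    ∃ K > (0:ℝ), ∃ t₀ > (0:ℝ), ∀ t ∈ Set.Ioo 0 t₀,
      ζ t ≤ K * t ^ (2 / (2 + r)) ∧ ζ t / t ≤ K * t ^ (-r / (2 + r)) := by
  have h2r : 0 < 2 + r := by linarith
  have hmono : MonotoneOn (fun u => u * √(φ u)) (Ioi 0) :=
    monotoneOn_mul_sqrt (fun s hs => (hφpos s hs).le) <| StrictMonoOn.monotoneOn <|
      strictMonoOn_of_deriv_pos (convex_Ioi 0) (continuousOn_id.mul hC1.continuousOn)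
        fun x hx => hderiv x (by rwa [interior_Ioi] at hx)
  have ht₀ : 0 < s₀ * √(φ s₀) := mul_pos hs₀ (Real.sqrt_pos.2 (hφpos s₀ hs₀))
  refine ⟨c₁⁻¹ ^ (2 + r)⁻¹, by positivity, s₀ * √(φ s₀), ht₀, fun t ⟨ht, htt₀⟩ => ?_⟩
  have hz : 0 < ζ t := hζpos t ht
  have hzs₀ : ζ t < s₀ :=
    hmono.reflect_lt (mem_Ioi.2 hz) (mem_Ioi.2 hs₀) (by simpa only [hζ2 t ht] using htt₀)
  have hζ_le : ζ t ≤ c₁⁻¹ ^ (2 + r)⁻¹ * t ^ (2 / (2 + r)) :=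
    le_inv_rpow_mul_rpow_of_mul_rpow_le_sq hz.le hc₁ h2r ht.le <|
      mul_rpow_le_sq_of_mul_sqrt_eq hz (hφpos _ hz).le (hφbound _ ⟨hz, hzs₀⟩).1 (hζ2 t ht)
  refine ⟨hζ_le, ?_⟩
  rw [← rpow_two_div_two_add_div_self ht.ne' h2r.ne', mul_div_assoc']
  gcongr

/-- If `φ(s) ≍ sʳ` on `(0, s₀)` for some `r > -1`, then there exist `K > 0` and `t₀ > 0`
with `ζ(t) ≤ K·t^(2/(2+r))` and `Θ(t) ≤ K·t^(-r/(2+r))` on `(0, t₀)`, where `ζ` is the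
inverse of `s·√φ(s)` and `Θ(t) = ζ(t)/t`. -/
theorem stmt_12 (φ ζ : ℝ → ℝ) (r s₀ c₁ c₂ : ℝ)
    (hφpos : ∀ s > (0:ℝ), 0 < φ s)
    (hC1 : ContDiffOn ℝ 1 φ (Set.Ioi 0))
    (hderiv : ∀ s > (0:ℝ), 0 < deriv (fun u => u * φ u) s)
    (hrange : (fun s => s * φ s) '' Set.Ioi 0 = Set.Ioi 0)
    (hζpos : ∀ t > (0:ℝ), 0 < ζ t)
    (hζ1 : ∀ s > (0:ℝ), ζ (s * Real.sqrt (φ s)) = s)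
    (hζ2 : ∀ t > (0:ℝ), ζ t * Real.sqrt (φ (ζ t)) = t)
    (hr : -1 < r) (hs₀ : 0 < s₀) (hc₁ : 0 < c₁) (hc₂ : 0 < c₂)
    (hφbound : ∀ s ∈ Set.Ioo 0 s₀, c₁ * s ^ r ≤ φ s ∧ φ s ≤ c₂ * s ^ r) :
    ∃ K > (0:ℝ), ∃ t₀ > (0:ℝ), ∀ t ∈ Set.Ioo 0 t₀,
      ζ t ≤ K * t ^ (2 / (2 + r)) ∧ ζ t / t ≤ K * t ^ (-r / (2 + r)) :=
  stmt_12_general φ ζ r s₀ c₁ c₂ hφpos hC1 hderiv hζpos hζ2 hr hs₀ hc₁ hφbound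
end

section
/- Let A be an N×N complex matrix with Im A symmetric, let γ ∈ ℝ satisfy |γ|·|⟨Im A ξ, ξ⟩| ≤ 2·⟨Re A ξ, ξ⟩ for all ξ ∈ ℝᴺ. Then the real quadratic form S(ξ,η) = ⟨Re A ξ, ξ⟩ + ⟨Re A η, η⟩ + γ·⟨Im A ξ, η⟩ is nonnegative for all ξ, η ∈ ℝᴺ. -/
/-!
Apply the hypothesis at `ξ + η` and at `ξ - η`, with opposite signs of `γ`. Adding the two
inequalities, the parallelogram law turns the `Re A` side into `4 (⟨Re A ξ, ξ⟩ + ⟨Re A η, η⟩)`,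
and polarization (which needs `Im A` symmetric) turns the `Im A` side into `4 ⟨Im A ξ, η⟩`.
-/

namespace Matrix

variable {n R : Type*} [Fintype n]

section CommRing

variable [CommRing R]

theorem dotProduct_mulVec_add_add_dotProduct_mulVec_sub_sub (M : Matrix n n R) (x y : n → R) :
    (x + y) ⬝ᵥ M *ᵥ (x + y) + (x - y) ⬝ᵥ M *ᵥ (x - y) = 2 * (x ⬝ᵥ M *ᵥ x + y ⬝ᵥ M *ᵥ y) := by
  simp only [mulVec_add, mulVec_sub, add_dotProduct, dotProduct_add, sub_dotProduct,
    dotProduct_sub]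
  ring

theorem IsSymm.dotProduct_mulVec_comm {M : Matrix n n R} (hM : M.IsSymm) (x y : n → R) :
    x ⬝ᵥ M *ᵥ y = y ⬝ᵥ M *ᵥ x := by
  rw [dotProduct_mulVec, ← mulVec_transpose, hM, dotProduct_comm]

theorem IsSymm.dotProduct_mulVec_add_sub_dotProduct_mulVec_sub {M : Matrix n n R}
    (hM : M.IsSymm) (x y : n → R) :
    (x + y) ⬝ᵥ M *ᵥ (x + y) - (x - y) ⬝ᵥ M *ᵥ (x - y) = 4 * (x ⬝ᵥ M *ᵥ y) := by
  simp only [mulVec_add, mulVec_sub, add_dotProduct, dotProduct_add, sub_dotProduct,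
    dotProduct_sub, hM.dotProduct_mulVec_comm y x]
  ring

end CommRing

theorem IsSymm.nonneg_add_mul_dotProduct_mulVec_of_abs_le [Field R] [LinearOrder R]
    [IsStrictOrderedRing R] {P Q : Matrix n n R} (hQ : Q.IsSymm) {γ : R}
    (h : ∀ x, |γ| * |x ⬝ᵥ Q *ᵥ x| ≤ 2 * (x ⬝ᵥ P *ᵥ x)) (x y : n → R) :
    0 ≤ x ⬝ᵥ P *ᵥ x + y ⬝ᵥ P *ᵥ y + γ * (x ⬝ᵥ Q *ᵥ y) := by
  have hbound : ∀ z, |γ * (z ⬝ᵥ Q *ᵥ z)| ≤ 2 * (z ⬝ᵥ P *ᵥ z) := fun z => abs_mul γ _ ▸ h z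
  have hplus := neg_le_of_abs_le (hbound (x + y))
  have hminus := le_of_abs_le (hbound (x - y))
  have hpar := P.dotProduct_mulVec_add_add_dotProduct_mulVec_sub_sub x y
  have hpol := hQ.dotProduct_mulVec_add_sub_dotProduct_mulVec_sub x y
  have hcross : γ * ((x + y) ⬝ᵥ Q *ᵥ (x + y)) - γ * ((x - y) ⬝ᵥ Q *ᵥ (x - y))
      = 4 * (γ * (x ⬝ᵥ Q *ᵥ y)) := by
    rw [← mul_sub, hpol]
    ring
  linarith

end Matrix

/-- Let `A` be an `N×N` complex matrix with `Im A` symmetric, and let `γ ∈ ℝ` satisfy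
`|γ|·|⟨Im A ξ, ξ⟩| ≤ 2·⟨Re A ξ, ξ⟩` for all `ξ ∈ ℝᴺ`. Then the form
`S(ξ,η) = ⟨Re A ξ, ξ⟩ + ⟨Re A η, η⟩ + γ·⟨Im A ξ, η⟩` is nonnegative. -/
theorem stmt_14 (N : ℕ) (A : Matrix (Fin N) (Fin N) ℂ)
    (hsym : (Matrix.of (fun i j => (A i j).im)).IsSymm)
    (γ : ℝ)
    (hγ : ∀ ξ : Fin N → ℝ,
      |γ| * |dotProduct ξ ((Matrix.of (fun i j => (A i j).im)).mulVec ξ)|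
        ≤ 2 * dotProduct ξ ((Matrix.of (fun i j => (A i j).re)).mulVec ξ)) :
    ∀ ξ η : Fin N → ℝ,
      0 ≤ dotProduct ξ ((Matrix.of (fun i j => (A i j).re)).mulVec ξ)
          + dotProduct η ((Matrix.of (fun i j => (A i j).re)).mulVec η)
          + γ * dotProduct ξ ((Matrix.of (fun i j => (A i j).im)).mulVec η) :=
  hsym.nonneg_add_mul_dotProduct_mulVec_of_abs_le hγ
end

section
/- Let A be an N×N complex matrix with Im A symmetric and let λ ∈ (-1,1). The inequality (1-λ²)·⟨Re A ξ, ξ⟩ + ⟨Re A η, η⟩ + 2λ·⟨Im A ξ, η⟩ ≥ 0 holds for all ξ, η ∈ ℝᴺ if and only if |λ|·|⟨Im A ξ, ξ⟩| ≤ √(1-λ²)·⟨Re A ξ, ξ⟩ for all ξ ∈ ℝᴺ. -/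
/-!
Write `q = R ξ ξ`, `s = S ξ ξ` and `c = √(1 - λ²)`. Taking `η = t • ξ` turns the two-variable
inequality into `q t² + 2λ s t + c² q ≥ 0` for all real `t`, whose discriminant condition is
`λ² s² ≤ c² q²`. Conversely, add the one-variable inequality at `c • ξ + η` in the form
`-c R ≤ λ S` to the one at `c • ξ - η` in the form `λ S ≤ c R`: the `R`-terms combine by the
parallelogram law into `2 (c² R ξ ξ + R η η)` and, `S` being symmetric, the `S`-terms leave
`4 c S ξ η`, which is `2c` times the two-variable inequality.
-/

namespace LinearMap.BilinForm

variable {M : Type*} [AddCommGroup M] [Module ℝ M] (R S : LinearMap.BilinForm ℝ M) {lam : ℝ}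

theorem abs_mul_abs_le_of_forall_nonneg (hlam : lam ^ 2 ≤ 1)
    (h : ∀ ξ η, 0 ≤ (1 - lam ^ 2) * R ξ ξ + R η η + 2 * lam * S ξ η) (ξ : M) :
    |lam| * |S ξ ξ| ≤ √(1 - lam ^ 2) * R ξ ξ := by
  have hRξ : 0 ≤ R ξ ξ := by simpa using h 0 ξ
  have hquad : ∀ t : ℝ, 0 ≤ R ξ ξ * (t * t) + 2 * lam * S ξ ξ * t + (1 - lam ^ 2) * R ξ ξ := by
    intro t
    have := h ξ (t • ξ)
    simp only [map_smul, LinearMap.smul_apply, smul_eq_mul] at this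
    linarith
  have hdisc := discrim_le_zero hquad
  rw [discrim] at hdisc
  rw [← abs_mul]
  refine abs_le_of_sq_le_sq ?_ (mul_nonneg (Real.sqrt_nonneg _) hRξ)
  rw [mul_pow, mul_pow, Real.sq_sqrt (by linarith)]
  nlinarith

theorem nonneg_of_forall_abs_mul_abs_le (hS : S.IsSymm) (hlam : lam ^ 2 < 1)
    (h : ∀ ξ, |lam| * |S ξ ξ| ≤ √(1 - lam ^ 2) * R ξ ξ) (ξ η : M) :
    0 ≤ (1 - lam ^ 2) * R ξ ξ + R η η + 2 * lam * S ξ η := by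
  set c := √(1 - lam ^ 2)
  have hc : 0 < c := Real.sqrt_pos.mpr (by linarith)
  have hc2 : c ^ 2 = 1 - lam ^ 2 := Real.sq_sqrt (by linarith)
  have hRsum : R (c • ξ + η) (c • ξ + η) + R (c • ξ - η) (c • ξ - η)
      = 2 * (c ^ 2 * R ξ ξ + R η η) := by
    simp only [map_add, map_sub, map_smul, LinearMap.add_apply, LinearMap.sub_apply,
      LinearMap.smul_apply, smul_eq_mul]
    ring
  have hSdiff : S (c • ξ + η) (c • ξ + η) - S (c • ξ - η) (c • ξ - η) = 4 * c * S ξ η := by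
    simp only [map_add, map_sub, map_smul, LinearMap.add_apply, LinearMap.sub_apply,
      LinearMap.smul_apply, smul_eq_mul, hS.eq η ξ]
    ring
  have hplus := (abs_le.mp ((abs_mul lam _).trans_le (h (c • ξ + η)))).1
  have hminus := (abs_le.mp ((abs_mul lam _).trans_le (h (c • ξ - η)))).2
  have key : 0 ≤ 2 * c * ((1 - lam ^ 2) * R ξ ξ + R η η + 2 * lam * S ξ η) := by
    rw [← hc2]
    linear_combination hplus + hminus + c * hRsum + lam * hSdiff
  exact nonneg_of_mul_nonneg_right key (by positivity)

theorem forall_nonneg_iff_forall_abs_mul_abs_le (hS : S.IsSymm) (hlam : lam ^ 2 < 1) :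
    (∀ ξ η, 0 ≤ (1 - lam ^ 2) * R ξ ξ + R η η + 2 * lam * S ξ η) ↔
      ∀ ξ, |lam| * |S ξ ξ| ≤ √(1 - lam ^ 2) * R ξ ξ :=
  ⟨abs_mul_abs_le_of_forall_nonneg R S hlam.le, nonneg_of_forall_abs_mul_abs_le R S hS hlam⟩

end LinearMap.BilinForm

/-- Let `A` be an `N×N` complex matrix with `Im A` symmetric and `λ ∈ (-1,1)`. Then
`(1-λ²)·⟨Re A ξ, ξ⟩ + ⟨Re A η, η⟩ + 2λ·⟨Im A ξ, η⟩ ≥ 0` for all `ξ, η` iff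
`|λ|·|⟨Im A ξ, ξ⟩| ≤ √(1-λ²)·⟨Re A ξ, ξ⟩` for all `ξ`. -/
theorem stmt_15 (N : ℕ) (A : Matrix (Fin N) (Fin N) ℂ)
    (hsym : (Matrix.of (fun i j => (A i j).im)).IsSymm)
    (lam : ℝ) (hlam : -1 < lam ∧ lam < 1) :
    (∀ ξ η : Fin N → ℝ,
      0 ≤ (1 - lam ^ 2)
            * dotProduct ξ ((Matrix.of (fun i j => (A i j).re)).mulVec ξ)
          + dotProduct η ((Matrix.of (fun i j => (A i j).re)).mulVec η)
          + 2 * lam * dotProduct ξ ((Matrix.of (fun i j => (A i j).im)).mulVec η))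
    ↔ (∀ ξ : Fin N → ℝ,
      |lam| * |dotProduct ξ ((Matrix.of (fun i j => (A i j).im)).mulVec ξ)|
        ≤ Real.sqrt (1 - lam ^ 2)
            * dotProduct ξ ((Matrix.of (fun i j => (A i j).re)).mulVec ξ)) := by
  have hlam2 : lam ^ 2 < 1 := (sq_lt_one_iff_abs_lt_one lam).mpr (abs_lt.mpr hlam)
  simpa only [Matrix.toBilin'_apply'] using
    LinearMap.BilinForm.forall_nonneg_iff_forall_abs_mul_abs_le
      (Matrix.of fun i j => (A i j).re).toBilin' (Matrix.of fun i j => (A i j).im).toBilin'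
      (Matrix.isSymm_toBilin'_iff_isSymm.mpr hsym) hlam2
end

section
/- For Φ(s) = s⁴/(s²+1), so φ(s) = Φ'(s)/s = 2s²(2+s²)/(s²+1)², the function |s·Φ''(s) - Φ'(s)| / (2·√(s·Φ'(s)·Φ''(s))) equals 2/√((s²+1)(s²+2)(s⁴+3s²+6)) for all s > 0, and its supremum over s > 0 is 1/√3. -/
/-!
Writing `P(s) = (s²+1)(s²+2)(s⁴+3s²+6)`, one has `sΦ'' - Φ' = 8s³/(s²+1)³` and
`sΦ'Φ'' = (2s³/(s²+1)³)² · P(s)`, so the quotient is `2/√P(s)`. Since `P ≥ 12` with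
`P(s) → 12` as `s → 0⁺`, the supremum is `2/√12 = 1/√3`, approached but not attained.
-/

open Real Filter Set Topology

theorem csSup_image_eq_of_forall_le_of_tendsto {α β : Type*} [ConditionallyCompleteLinearOrder β]
    [TopologicalSpace β] [OrderClosedTopology β] {f : α → β} {s : Set α} {l : Filter α}
    [l.NeBot] {c : β} (hs : s ∈ l) (hle : ∀ x ∈ s, f x ≤ c) (hlim : Tendsto f l (𝓝 c)) :
    sSup (f '' s) = c := by
  have hbdd : BddAbove (f '' s) := ⟨c, forall_mem_image.2 hle⟩
  refine le_antisymm (csSup_le ((Filter.nonempty_of_mem hs).image f) (forall_mem_image.2 hle)) ?_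
  exact le_of_tendsto hlim (mem_of_superset hs fun x hx => le_csSup hbdd (mem_image_of_mem f hx))

lemma hasDerivAt_pow_four_div (s : ℝ) :
    HasDerivAt (fun s : ℝ => s ^ 4 / (s ^ 2 + 1))
      (2 * s ^ 3 * (s ^ 2 + 2) / (s ^ 2 + 1) ^ 2) s :=
  ((hasDerivAt_pow 4 s).div ((hasDerivAt_pow 2 s).add_const 1) (by positivity)).congr_deriv
    (by field_simp; ring)

lemma hasDerivAt_deriv_pow_four_div (s : ℝ) :
    HasDerivAt (fun s : ℝ => 2 * s ^ 3 * (s ^ 2 + 2) / (s ^ 2 + 1) ^ 2)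
      (2 * s ^ 2 * (s ^ 4 + 3 * s ^ 2 + 6) / (s ^ 2 + 1) ^ 3) s :=
  ((((hasDerivAt_pow 3 s).const_mul 2).mul ((hasDerivAt_pow 2 s).add_const 2)).div
    (((hasDerivAt_pow 2 s).add_const 1).pow 2)
    (by simp only [Pi.pow_apply]; positivity)).congr_deriv
    (by simp only [Pi.mul_apply, Pi.pow_apply]; field_simp; ring)

lemma abs_sub_div_two_mul_sqrt_eq {s : ℝ} (hs : 0 < s) :
    |s * (2 * s ^ 2 * (s ^ 4 + 3 * s ^ 2 + 6) / (s ^ 2 + 1) ^ 3)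
        - 2 * s ^ 3 * (s ^ 2 + 2) / (s ^ 2 + 1) ^ 2|
      / (2 * √(s * (2 * s ^ 3 * (s ^ 2 + 2) / (s ^ 2 + 1) ^ 2)
          * (2 * s ^ 2 * (s ^ 4 + 3 * s ^ 2 + 6) / (s ^ 2 + 1) ^ 3)))
      = 2 / √((s ^ 2 + 1) * (s ^ 2 + 2) * (s ^ 4 + 3 * s ^ 2 + 6)) := by
  set c : ℝ := 2 * s ^ 3 / (s ^ 2 + 1) ^ 3 with hc
  have hc_pos : 0 < c := by positivity
  have hnum : s * (2 * s ^ 2 * (s ^ 4 + 3 * s ^ 2 + 6) / (s ^ 2 + 1) ^ 3)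
      - 2 * s ^ 3 * (s ^ 2 + 2) / (s ^ 2 + 1) ^ 2 = 4 * c := by
    rw [hc]; field_simp; ring
  have hprod : s * (2 * s ^ 3 * (s ^ 2 + 2) / (s ^ 2 + 1) ^ 2)
      * (2 * s ^ 2 * (s ^ 4 + 3 * s ^ 2 + 6) / (s ^ 2 + 1) ^ 3)
      = c ^ 2 * ((s ^ 2 + 1) * (s ^ 2 + 2) * (s ^ 4 + 3 * s ^ 2 + 6)) := by
    rw [hc]; field_simp
  have hP : 0 < √((s ^ 2 + 1) * (s ^ 2 + 2) * (s ^ 4 + 3 * s ^ 2 + 6)) := by positivity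
  rw [hnum, hprod, sqrt_mul (sq_nonneg c), sqrt_sq hc_pos.le, abs_of_pos (by positivity)]
  field_simp
  norm_num

section

variable {Φ : ℝ → ℝ} (hΦ : ∀ s > (0 : ℝ), Φ s = s ^ 4 / (s ^ 2 + 1)) {s : ℝ} (hs : 0 < s)
include hΦ hs

lemma deriv_eventuallyEq_of_eqOn_Ioi :
    deriv Φ =ᶠ[𝓝 s] fun s => 2 * s ^ 3 * (s ^ 2 + 2) / (s ^ 2 + 1) ^ 2 := by
  filter_upwards [Ioi_mem_nhds hs] with t ht
  have hEq : Φ =ᶠ[𝓝 t] fun s => s ^ 4 / (s ^ 2 + 1) :=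
    eventuallyEq_of_mem (Ioi_mem_nhds ht) hΦ
  rw [hEq.deriv_eq, (hasDerivAt_pow_four_div t).deriv]

lemma deriv_eq_of_eqOn_Ioi : deriv Φ s = 2 * s ^ 3 * (s ^ 2 + 2) / (s ^ 2 + 1) ^ 2 :=
  (deriv_eventuallyEq_of_eqOn_Ioi hΦ hs).eq_of_nhds

lemma deriv_deriv_eq_of_eqOn_Ioi :
    deriv (deriv Φ) s = 2 * s ^ 2 * (s ^ 4 + 3 * s ^ 2 + 6) / (s ^ 2 + 1) ^ 3 := by
  rw [(deriv_eventuallyEq_of_eqOn_Ioi hΦ hs).deriv_eq, (hasDerivAt_deriv_pow_four_div s).deriv]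

lemma abs_sub_div_two_mul_sqrt_deriv_eq_of_eqOn_Ioi :
    |s * deriv (deriv Φ) s - deriv Φ s| / (2 * √(s * deriv Φ s * deriv (deriv Φ) s))
      = 2 / √((s ^ 2 + 1) * (s ^ 2 + 2) * (s ^ 4 + 3 * s ^ 2 + 6)) := by
  rw [deriv_eq_of_eqOn_Ioi hΦ hs, deriv_deriv_eq_of_eqOn_Ioi hΦ hs]
  exact abs_sub_div_two_mul_sqrt_eq hs

end

lemma two_div_sqrt_twelve : 2 / √12 = 1 / √3 := by
  rw [show (12 : ℝ) = 2 ^ 2 * 3 by norm_num, sqrt_mul (by positivity), sqrt_sq zero_le_two]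
  field_simp

lemma two_div_sqrt_le (s : ℝ) :
    2 / √((s ^ 2 + 1) * (s ^ 2 + 2) * (s ^ 4 + 3 * s ^ 2 + 6)) ≤ 1 / √3 := by
  rw [← two_div_sqrt_twelve]
  have h12 : (12 : ℝ) ≤ (s ^ 2 + 1) * (s ^ 2 + 2) * (s ^ 4 + 3 * s ^ 2 + 6) := by
    have : 0 ≤ s ^ 2 := sq_nonneg s
    nlinarith [mul_nonneg this this, mul_nonneg (mul_nonneg this this) this]
  gcongr

lemma tendsto_two_div_sqrt :
    Tendsto (fun s : ℝ => 2 / √((s ^ 2 + 1) * (s ^ 2 + 2) * (s ^ 4 + 3 * s ^ 2 + 6)))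
      (𝓝[>] 0) (𝓝 (1 / √3)) := by
  have hcont : ContinuousAt
      (fun s : ℝ => 2 / √((s ^ 2 + 1) * (s ^ 2 + 2) * (s ^ 4 + 3 * s ^ 2 + 6))) 0 :=
    continuousAt_const.div (by fun_prop) (by norm_num)
  convert hcont.tendsto.mono_left nhdsWithin_le_nhds using 2
  norm_num [two_div_sqrt_twelve]

/-- For `Φ(s) = s⁴/(s²+1)`, the function `|s·Φ''(s) - Φ'(s)| / (2·√(s·Φ'(s)·Φ''(s)))`
equals `2/√((s²+1)(s²+2)(s⁴+3s²+6))` for all `s > 0`, and its supremum over `s > 0`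
is `1/√3`. -/
theorem stmt_17 (Φ : ℝ → ℝ)
    (hΦ : ∀ s > (0:ℝ), Φ s = s ^ 4 / (s ^ 2 + 1)) :
    (∀ s > (0:ℝ),
      |s * deriv (deriv Φ) s - deriv Φ s|
          / (2 * Real.sqrt (s * deriv Φ s * deriv (deriv Φ) s))
        = 2 / Real.sqrt ((s ^ 2 + 1) * (s ^ 2 + 2) * (s ^ 4 + 3 * s ^ 2 + 6))) ∧
    sSup ((fun s => |s * deriv (deriv Φ) s - deriv Φ s|
          / (2 * Real.sqrt (s * deriv Φ s * deriv (deriv Φ) s))) '' Set.Ioi 0)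
      = 1 / Real.sqrt 3 := by
  have hquot := fun s (hs : 0 < s) => abs_sub_div_two_mul_sqrt_deriv_eq_of_eqOn_Ioi hΦ hs
  refine ⟨hquot, csSup_image_eq_of_forall_le_of_tendsto
    (self_mem_nhdsWithin (a := 0)) (fun s hs => (hquot s hs).trans_le (two_div_sqrt_le s)) ?_⟩
  exact tendsto_two_div_sqrt.congr' (eventually_nhdsWithin_of_forall fun s hs => (hquot s hs).symm)
end

section
/- For Φ(s) = s²(s²+2)/(s²+1) - 2·log(s²+1), the function |s·Φ''(s) - Φ'(s)| / (2·√(s·Φ'(s)·Φ''(s))) equals 2/√((s²+1)(s²+5)) for all s > 0, and its supremum over s > 0 is 2/√5. -/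
/-!
On `s > 0` both derivatives are explicit: `Φ'(s) = 2s⁵/(s²+1)²` and
`Φ''(s) = 2s⁴(s²+5)/(s²+1)³`. With `c = 2s⁵/(s²+1)³` this gives `sΦ'' - Φ' = 4c` and
`sΦ'Φ'' = c²(s²+1)(s²+5)`, so the ratio is `2/√((s²+1)(s²+5))`. That function decreases in `s`
and is continuous at `0`, so its supremum over `s > 0` is its value `2/√5` at `0`.
-/

open Set Real

noncomputable def Φ₀ (s : ℝ) : ℝ := s ^ 2 * (s ^ 2 + 2) / (s ^ 2 + 1) - 2 * log (s ^ 2 + 1)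

theorem hasDerivAt_Φ₀ (s : ℝ) : HasDerivAt Φ₀ (2 * s ^ 5 / (s ^ 2 + 1) ^ 2) s := by
  have hpos : s ^ 2 + 1 ≠ 0 := by positivity
  have hsq : HasDerivAt (fun x : ℝ => x ^ 2 + 1) (2 * s) s := by
    simpa using (hasDerivAt_pow 2 s).add_const 1
  have hnum : HasDerivAt (fun x : ℝ => x ^ 2 * (x ^ 2 + 2)) (2 * s * (s ^ 2 + 2) + s ^ 2 * (2 * s)) s :=
    ((hasDerivAt_pow 2 s).mul ((hasDerivAt_pow 2 s).add_const 2)).congr_deriv (by norm_num)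
  have hlog := ((hasDerivAt_log hpos).comp s hsq).const_mul 2
  refine ((hnum.div hsq hpos).sub hlog).congr_deriv ?_
  field_simp
  ring

theorem deriv_Φ₀ (s : ℝ) : deriv Φ₀ s = 2 * s ^ 5 / (s ^ 2 + 1) ^ 2 :=
  (hasDerivAt_Φ₀ s).deriv

theorem hasDerivAt_deriv_Φ₀ (s : ℝ) :
    HasDerivAt (deriv Φ₀) (2 * s ^ 4 * (s ^ 2 + 5) / (s ^ 2 + 1) ^ 3) s := by
  have hpos : s ^ 2 + 1 ≠ 0 := by positivity
  have hsq : HasDerivAt (fun x : ℝ => x ^ 2 + 1) (2 * s) s := by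
    simpa using (hasDerivAt_pow 2 s).add_const 1
  have hden : HasDerivAt (fun x : ℝ => (x ^ 2 + 1) ^ 2) (2 * (s ^ 2 + 1) ^ 1 * (2 * s)) s :=
    hsq.pow 2
  rw [funext deriv_Φ₀]
  refine (((hasDerivAt_pow 5 s).const_mul 2).div hden (pow_ne_zero 2 hpos)).congr_deriv ?_
  field_simp
  ring

theorem deriv_deriv_Φ₀ (s : ℝ) :
    deriv (deriv Φ₀) s = 2 * s ^ 4 * (s ^ 2 + 5) / (s ^ 2 + 1) ^ 3 :=
  (hasDerivAt_deriv_Φ₀ s).deriv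

theorem abs_sub_div_sqrt_Φ₀ {s : ℝ} (hs : s ≠ 0) :
    |s * deriv (deriv Φ₀) s - deriv Φ₀ s| / (2 * √(s * deriv Φ₀ s * deriv (deriv Φ₀) s))
      = 2 / √((s ^ 2 + 1) * (s ^ 2 + 5)) := by
  set c := 2 * s ^ 5 / (s ^ 2 + 1) ^ 3 with hc_def
  have hc : c ≠ 0 := by positivity
  have hnum : s * deriv (deriv Φ₀) s - deriv Φ₀ s = 4 * c := by
    rw [deriv_Φ₀, deriv_deriv_Φ₀, hc_def]
    field_simp
    ring
  have hprod : s * deriv Φ₀ s * deriv (deriv Φ₀) s = c ^ 2 * ((s ^ 2 + 1) * (s ^ 2 + 5)) := by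
    rw [deriv_Φ₀, deriv_deriv_Φ₀, hc_def]
    field_simp
  rw [hnum, hprod, sqrt_mul (sq_nonneg c), sqrt_sq_eq_abs, abs_mul, abs_of_pos four_pos]
  field_simp [abs_ne_zero.2 hc]
  ring

theorem isLUB_image_of_continuousWithinAt {α β : Type*} [TopologicalSpace α] [TopologicalSpace β]
    [LinearOrder β] [OrderTopology β] {f : α → β} {S : Set α} {a : α}
    (hf : ContinuousWithinAt f S a) (ha : a ∈ closure S) (hle : ∀ x ∈ S, f x ≤ f a) :
    IsLUB (f '' S) (f a) :=
  isLUB_of_mem_closure (forall_mem_image.2 hle) (hf.mem_closure_image ha)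

/-- For `Φ(s) = s²(s²+2)/(s²+1) - 2·log(s²+1)`, the function
`|s·Φ''(s) - Φ'(s)| / (2·√(s·Φ'(s)·Φ''(s)))` equals `2/√((s²+1)(s²+5))` for all
`s > 0`, and its supremum over `s > 0` is `2/√5`. -/
theorem stmt_18 (Φ : ℝ → ℝ)
    (hΦ : ∀ s > (0:ℝ), Φ s = s ^ 2 * (s ^ 2 + 2) / (s ^ 2 + 1) - 2 * Real.log (s ^ 2 + 1)) :
    (∀ s > (0:ℝ),
      |s * deriv (deriv Φ) s - deriv Φ s|
          / (2 * Real.sqrt (s * deriv Φ s * deriv (deriv Φ) s))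
        = 2 / Real.sqrt ((s ^ 2 + 1) * (s ^ 2 + 5))) ∧
    sSup ((fun s => |s * deriv (deriv Φ) s - deriv Φ s|
          / (2 * Real.sqrt (s * deriv Φ s * deriv (deriv Φ) s))) '' Set.Ioi 0)
      = 2 / Real.sqrt 5 := by
  have hd : EqOn (deriv Φ) (deriv Φ₀) (Ioi 0) := EqOn.deriv (fun s hs => hΦ s hs) isOpen_Ioi
  have hdd : EqOn (deriv (deriv Φ)) (deriv (deriv Φ₀)) (Ioi 0) := hd.deriv isOpen_Ioi
  have hratio : ∀ s > (0:ℝ), |s * deriv (deriv Φ) s - deriv Φ s|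
      / (2 * √(s * deriv Φ s * deriv (deriv Φ) s)) = 2 / √((s ^ 2 + 1) * (s ^ 2 + 5)) := by
    intro s hs
    rw [hd hs, hdd hs]
    exact abs_sub_div_sqrt_Φ₀ hs.ne'
  refine ⟨hratio, ?_⟩
  rw [image_congr (s := Ioi 0) hratio]
  have hlub := isLUB_image_of_continuousWithinAt
    (f := fun s : ℝ => 2 / √((s ^ 2 + 1) * (s ^ 2 + 5))) (S := Ioi 0) (a := 0)
    (continuous_const.div₀ (by fun_prop) (fun s => by positivity)).continuousWithinAt
    (by simp [closure_Ioi])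
    (fun s _ => by gcongr 2 / √?_; nlinarith [sq_nonneg s])
  norm_num at hlub
  exact hlub.csSup_eq (nonempty_Ioi.image _)
end
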